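/- arXiv:1705.00357 — 2 statements merged into one kernel-verified Lean document; each statement's English description precedes it below -/
import Mathlib

section
/- Let {ψ_j}_{j∈J} be a frame in H with frame operator S and canonical dual frame ψ̃_j = S^{-1}ψ_j, and let C : H → H be a bounded A-linear operator such that Cψ_j = ω_j·ψ_j for some elements ω_j ∈ Z(A), for all j ∈ J. Then for every f ∈ H the series Σ_{j∈J} ω_j·⟨f,ψ̃_j⟩·ψ_j converges in H and Cf = Σ_{j∈J} ω_j·⟨f,ψ̃_j⟩·ψ_j; that is, C equals the multiplier operator M_{ω,ψ̃,ψ}. -/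
open scoped RightActions

/-- Mathlib's `CStarModule` as of December 2024 (right action of `Aᵐᵒᵖ`, inner product
`A`-linear on the right via `inner x (y <• a) = inner x y * a`); the current Mathlib class has
changed to a left action, so the old class is reproduced here. -/
class CStarModuleOld (A : outParam <| Type*) (E : Type*) [NonUnitalSemiring A] [StarRing A]
    [Module ℂ A] [AddCommGroup E] [Module ℂ E] [PartialOrder A] [SMul Aᵐᵒᵖ E] [Norm A] [Norm E]
    extends Inner A E where
  inner_add_right {x} {y} {z} : inner x (y + z) = inner x y + inner x z
  inner_self_nonneg {x} : 0 ≤ inner x x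
  inner_self {x} : inner x x = 0 ↔ x = 0
  inner_op_smul_right {a : A} {x y : E} : inner x (y <• a) = inner x y * a
  inner_smul_right_complex {z : ℂ} {x} {y} : inner x (z • y) = z • inner x y
  star_inner x y : star (inner x y) = inner y x
  norm_eq_sqrt_norm_inner_self x : ‖x‖ = √‖inner x x‖

section

/- `A` is a unital C⋆-algebra (with its order coming from the positive cone), `H` is a
Hilbert C⋆-module over `A`, and `J` is a countable index set.  Following Mathlib, the
`A`-valued inner product `⟪f, g⟫ := inner g f` is `A`-linear in the first variable `f`
(with respect to the module action `f <• a`), and the norm on `H` satisfies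
`‖f‖ = ‖⟪f, f⟫‖ ^ (1/2)`. -/
variable {A : Type*} [CStarAlgebra A] [PartialOrder A] [StarOrderedRing A]
variable {H : Type*} [NormedAddCommGroup H] [NormedSpace ℂ H] [SMul Aᵐᵒᵖ H] [CStarModuleOld A H]
variable {J : Type*} [Countable J]

local notation "⟪" f ", " g "⟫" => (inner (𝕜 := A) g f)


private lemma old_inner_sub_right (x y z : H) :
    inner (𝕜 := A) x (y - z) = inner (𝕜 := A) x y - inner (𝕜 := A) x z := by
  have := CStarModuleOld.inner_add_right (A := A) (x := x) (y := y - z) (z := z)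
  rw [sub_add_cancel] at this
  rw [this, add_sub_cancel_right]

private lemma old_inner_sub_left (x y z : H) :
    inner (𝕜 := A) (x - y) z = inner (𝕜 := A) x z - inner (𝕜 := A) y z := by
  rw [← CStarModuleOld.star_inner z, old_inner_sub_right, star_sub,
    CStarModuleOld.star_inner, CStarModuleOld.star_inner]

private lemma old_inner_op_smul_left (a : A) (x y : H) :
    inner (𝕜 := A) (x <• a) y = star a * inner (𝕜 := A) x y := by
  rw [← CStarModuleOld.star_inner y, CStarModuleOld.inner_op_smul_right, star_mul,
    CStarModuleOld.star_inner]

private lemma old_inner_smul_right_real (r : ℝ) (x y : H) :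
    inner (𝕜 := A) x (r • y) = r • inner (𝕜 := A) x y := by
  have h₁ : r • y = (r : ℂ) • y := by simp
  have h₂ : r • inner (𝕜 := A) x y = (r : ℂ) • inner (𝕜 := A) x y := by simp
  rw [h₁, h₂, CStarModuleOld.inner_smul_right_complex]

private lemma old_inner_smul_left_real (r : ℝ) (x y : H) :
    inner (𝕜 := A) (r • x) y = r • inner (𝕜 := A) x y := by
  rw [← CStarModuleOld.star_inner y, old_inner_smul_right_real, star_smul,
    CStarModuleOld.star_inner, star_trivial]

private lemma old_inner_mul_inner_swap_le (x y : H) :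
    inner (𝕜 := A) y x * inner (𝕜 := A) x y ≤ ‖x‖ ^ 2 • inner (𝕜 := A) y y := by
  rcases eq_or_ne x 0 with h | h
  · subst h
    have : inner (𝕜 := A) y (0 : H) = 0 := by
      simpa using old_inner_sub_right (A := A) y (0 : H) 0
    simp [this]
  · have hpos : 0 < ‖x‖ ^ 2 := pow_pos (norm_pos_iff.mpr h) _
    have h₁ : ∀ (a : A),
        (0 : A) ≤ ‖x‖ ^ 2 • (star a * a) - ‖x‖ ^ 2 • (star a * inner (𝕜 := A) x y)
                  - ‖x‖ ^ 2 • (inner (𝕜 := A) y x * a)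
                  + ‖x‖ ^ 2 • (‖x‖ ^ 2 • inner (𝕜 := A) y y) := fun a => by
      calc (0 : A) ≤ inner (𝕜 := A) (x <• a - ‖x‖ ^ 2 • y) (x <• a - ‖x‖ ^ 2 • y) :=
                      by exact CStarModuleOld.inner_self_nonneg
            _ = star a * inner (𝕜 := A) x x * a - ‖x‖ ^ 2 • (star a * inner (𝕜 := A) x y)
                  - ‖x‖ ^ 2 • (inner (𝕜 := A) y x * a)
                  + ‖x‖ ^ 2 • (‖x‖ ^ 2 • inner (𝕜 := A) y y) := by
                      simp only [old_inner_sub_right, old_inner_sub_left,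
                        CStarModuleOld.inner_op_smul_right, old_inner_op_smul_left,
                        old_inner_smul_left_real, old_inner_smul_right_real, mul_smul_comm,
                        smul_mul_assoc, smul_sub, sub_mul, mul_assoc]
                      abel
            _ ≤ ‖x‖ ^ 2 • (star a * a) - ‖x‖ ^ 2 • (star a * inner (𝕜 := A) x y)
                  - ‖x‖ ^ 2 • (inner (𝕜 := A) y x * a)
                  + ‖x‖ ^ 2 • (‖x‖ ^ 2 • inner (𝕜 := A) y y) := by
                      gcongr
                      calc _ ≤ ‖inner (𝕜 := A) x x‖ • (star a * a) :=
                          CStarAlgebra.star_left_conjugate_le_norm_smul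
                            (hb := CStarModuleOld.star_inner x x)
                        _ = ‖x‖ ^ 2 • (star a * a) := by
                          rw [CStarModuleOld.norm_eq_sqrt_norm_inner_self (A := A) x,
                            Real.sq_sqrt (norm_nonneg _)]
    specialize h₁ (inner (𝕜 := A) x y)
    rw [CStarModuleOld.star_inner] at h₁
    have h₂ : ‖x‖ ^ 2 • (inner (𝕜 := A) y x * inner (𝕜 := A) x y)
        ≤ ‖x‖ ^ 2 • (‖x‖ ^ 2 • inner (𝕜 := A) y y) := by
      rw [← sub_nonneg]
      convert h₁ using 1
      abel
    exact (smul_le_smul_iff_of_pos_left hpos).mp h₂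

private lemma old_norm_inner_le (x y : H) : ‖inner (𝕜 := A) x y‖ ≤ ‖x‖ * ‖y‖ := by
  have : ‖inner (𝕜 := A) x y‖ ^ 2 ≤ (‖x‖ * ‖y‖) ^ 2 := calc
    ‖inner (𝕜 := A) x y‖ ^ 2 = ‖star (inner (𝕜 := A) x y) * inner (𝕜 := A) x y‖ := by
        rw [CStarRing.norm_star_mul_self, pow_two]
    _ = ‖inner (𝕜 := A) y x * inner (𝕜 := A) x y‖ := by rw [CStarModuleOld.star_inner]
    _ ≤ ‖‖x‖ ^ 2 • inner (𝕜 := A) y y‖ :=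
        CStarAlgebra.norm_le_norm_of_nonneg_of_le
          (by rw [← CStarModuleOld.star_inner x y]; exact star_mul_self_nonneg _)
          (old_inner_mul_inner_swap_le x y)
    _ = ‖x‖ ^ 2 * ‖inner (𝕜 := A) y y‖ := by
        rw [norm_smul, Real.norm_of_nonneg (by positivity)]
    _ = (‖x‖ * ‖y‖) ^ 2 := by
        rw [CStarModuleOld.norm_eq_sqrt_norm_inner_self (A := A) y, mul_pow,
          Real.sq_sqrt (norm_nonneg _)]
  exact (pow_le_pow_iff_left₀ (norm_nonneg _) (by positivity) (by norm_num)).mp this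

private noncomputable def innerCL (g : H) : H →L[ℂ] A :=
  LinearMap.mkContinuous
    { toFun := fun y => inner (𝕜 := A) g y
      map_add' := fun _ _ => CStarModuleOld.inner_add_right
      map_smul' := fun _ _ => CStarModuleOld.inner_smul_right_complex }
    ‖g‖ (fun y => old_norm_inner_le g y)

private lemma innerCL_apply (g y : H) : innerCL (A := A) g y = inner (𝕜 := A) g y := rfl

private lemma op_smul_op_smul' (x : H) (a b : A) : (x <• a) <• b = x <• (a * b) := by
  have h : ∀ y : H, inner (𝕜 := A) y ((x <• a) <• b) = inner (𝕜 := A) y (x <• (a * b)) := by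
    intro y
    simp only [CStarModuleOld.inner_op_smul_right, mul_assoc]
  set d : H := (x <• a) <• b - x <• (a * b) with hd
  have hdd : inner (𝕜 := A) d d = 0 := by
    rw [hd, old_inner_sub_right, h, sub_self]
  exact sub_eq_zero.mp (CStarModuleOld.inner_self.mp hdd)

/-- If `{ψ_j}` is a frame with frame operator `S` and canonical dual
`ψ̃_j = S⁻¹ψ_j`, and `C` is a bounded `A`-linear operator with `Cψ_j = ω_j·ψ_j` for central
elements `ω_j`, then `C f = Σ_j ω_j·⟨f,ψ̃_j⟩·ψ_j` for every `f`; that is,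
`C = M_{ω,ψ̃,ψ}`. -/
theorem diagonal_operator_is_multiplier
    (ψ : J → H) (Ca Da : ℝ) (hCa : 0 < Ca) (hDa : 0 < Da)
    (hsum : ∀ f : H, Summable fun j => ⟪f, ψ j⟫ * ⟪ψ j, f⟫)
    (hlow : ∀ f : H, Ca • ⟪f, f⟫ ≤ ∑' j, ⟪f, ψ j⟫ * ⟪ψ j, f⟫)
    (hupp : ∀ f : H, ∑' j, ⟪f, ψ j⟫ * ⟪ψ j, f⟫ ≤ Da • ⟪f, f⟫)
    (S : H →L[ℂ] H) (hSA : ∀ (a : A) (x : H), S (x <• a) = S x <• a)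
    (hS : ∀ f : H, HasSum (fun j => ψ j <• ⟪f, ψ j⟫) (S f))
    (Sinv : H →L[ℂ] H) (hSinv₁ : ∀ x, Sinv (S x) = x) (hSinv₂ : ∀ x, S (Sinv x) = x)
    (C : H →L[ℂ] H) (hCA : ∀ (a : A) (x : H), C (x <• a) = C x <• a)
    (ω : J → A) (hωc : ∀ j, ω j ∈ Set.center A)
    (heig : ∀ j, C (ψ j) = ψ j <• ω j) :
    ∀ f : H, HasSum (fun j => ψ j <• (ω j * ⟪f, Sinv (ψ j)⟫)) (C f) := by
  -- the "matrix coefficient" expansion of `S`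
  have h1 : ∀ g x : H, HasSum (fun j => inner (𝕜 := A) g (ψ j) * inner (𝕜 := A) (ψ j) x)
      (inner (𝕜 := A) g (S x)) := by
    intro g x
    have := (innerCL (A := A) g).hasSum (hS x)
    simpa [innerCL_apply, CStarModuleOld.inner_op_smul_right] using this
  -- `S` is self-adjoint with respect to the `A`-valued inner product
  have h2 : ∀ g x : H, HasSum (fun j => inner (𝕜 := A) g (ψ j) * inner (𝕜 := A) (ψ j) x)
      (inner (𝕜 := A) (S g) x) := by
    intro g x
    have := (h1 x g).star
    simpa [star_mul, mul_comm, CStarModuleOld.star_inner] using this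
  have hadj : ∀ g x : H, inner (𝕜 := A) g (S x) = inner (𝕜 := A) (S g) x := fun g x =>
    (h1 g x).unique (h2 g x)
  -- hence `Sinv` is self-adjoint as well
  have hadj' : ∀ g x : H, inner (𝕜 := A) g (Sinv x) = inner (𝕜 := A) (Sinv g) x := by
    intro g x
    calc inner (𝕜 := A) g (Sinv x) = inner (𝕜 := A) (S (Sinv g)) (Sinv x) := by rw [hSinv₂]
    _ = inner (𝕜 := A) (Sinv g) (S (Sinv x)) := (hadj (Sinv g) (Sinv x)).symm
    _ = inner (𝕜 := A) (Sinv g) x := by rw [hSinv₂]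
  intro f
  -- reconstruction formula with the canonical dual frame
  have hf : HasSum (fun j => ψ j <• inner (𝕜 := A) (ψ j) (Sinv f)) f := by
    simpa [hSinv₂] using hS (Sinv f)
  have hCf := C.hasSum hf
  have key : ∀ j, C (ψ j <• inner (𝕜 := A) (ψ j) (Sinv f))
      = ψ j <• (ω j * ⟪f, Sinv (ψ j)⟫) := by
    intro j
    rw [hCA, heig, op_smul_op_smul', hadj' (ψ j) f]
  simpa [key] using hCf
end
end

section
/- Let {ψ_j}_{j∈J} be a sequence in H such that for every f ∈ H the series Σ_{j∈J} ⟨f,ψ_j⟩⟨ψ_j,f⟩ converges in norm in A, and let {ω_j}_{j∈J} ⊆ Z(A) be a semi-normalized sequence of positive invertible central elements with bounds 0 < a ≤ b. Then {ψ_j}_{j∈J} is a frame for H if and only if {ω_j·ψ_j}_{j∈J} is a frame for H. -/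
open scoped RightActions

/-- The Hilbert C⋆-module class as Mathlib (December 2024) defined it: a *right* `A`-module
structure `SMul Aᵐᵒᵖ E`, with `inner x (y <• a) = inner x y * a`. -/
class CStarModuleRight (A E : Type*) [NonUnitalSemiring A] [StarRing A]
    [Module ℂ A] [AddCommGroup E] [Module ℂ E] [PartialOrder A] [SMul Aᵐᵒᵖ E] [Norm A] [Norm E]
    extends Inner A E where
  inner_add_right {x} {y} {z} : inner x (y + z) = inner x y + inner x z
  inner_self_nonneg {x} : 0 ≤ inner x x
  inner_self {x} : inner x x = 0 ↔ x = 0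
  inner_op_smul_right {a : A} {x y : E} : inner x (y <• a) = inner x y * a
  inner_smul_right_complex {z : ℂ} {x} {y} : inner x (z • y) = z • inner x y
  star_inner x y : star (inner x y) = inner y x
  norm_eq_sqrt_norm_inner_self x : ‖x‖ = Real.sqrt ‖inner x x‖

section

/- `A` is a unital C⋆-algebra (with its order coming from the positive cone), `H` is a
Hilbert C⋆-module over `A`, and `J` is a countable index set.  Following Mathlib, the
`A`-valued inner product `⟪f, g⟫ := inner g f` is `A`-linear in the first variable `f`
(with respect to the module action `f <• a`), and the norm on `H` satisfies
`‖f‖ = ‖⟪f, f⟫‖ ^ (1/2)`. -/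
variable {A : Type*} [CStarAlgebra A] [PartialOrder A] [StarOrderedRing A]
variable {H : Type*} [NormedAddCommGroup H] [NormedSpace ℂ H] [SMul Aᵐᵒᵖ H] [CStarModuleRight A H]
variable {J : Type*} [Countable J]

local notation "⟪" f ", " g "⟫" => (inner (𝕜 := A) g f)

private lemma aux_inner_op_smul_left (x y : H) (c : A) :
    inner (𝕜 := A) (y <• c) x = star c * inner (𝕜 := A) y x := by
  rw [← CStarModuleRight.star_inner x (y <• c), CStarModuleRight.inner_op_smul_right, star_mul,
    CStarModuleRight.star_inner]

/-- Comparison test for summability in a C⋆-algebra. -/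
private lemma aux_summable_of_nonneg_of_le {ι : Type*} {f g : ι → A}
    (hf : ∀ j, 0 ≤ f j) (hfg : ∀ j, f j ≤ g j) (hg : Summable g) : Summable f := by
  rw [summable_iff_vanishing] at hg ⊢
  intro e he
  obtain ⟨ε, hε, hball⟩ := Metric.mem_nhds_iff.mp he
  obtain ⟨s, hs⟩ := hg (Metric.ball 0 ε) (Metric.ball_mem_nhds 0 hε)
  refine ⟨s, fun t ht => hball ?_⟩
  have h1 : (0 : A) ≤ ∑ i ∈ t, f i := Finset.sum_nonneg fun i _ => hf i
  have h2 : ∑ i ∈ t, f i ≤ ∑ i ∈ t, g i := Finset.sum_le_sum fun i _ => hfg i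
  have h3 := CStarAlgebra.norm_le_norm_of_nonneg_of_le h1 h2
  have h4 := hs t ht
  rw [Metric.mem_ball, dist_zero_right] at h4 ⊢
  exact h3.trans_lt h4

/-- Two-sided bound for conjugation by a semi-normalized positive central element. -/
private lemma aux_conj_bounds {ω t : A} {a b : ℝ}
    (hcomm : ∀ x : A, x * ω = ω * x)
    (hωpos : 0 ≤ ω) (ht : 0 ≤ t) (ha : 0 < a) (hb : 0 ≤ b)
    (hlow : a • (1 : A) ≤ ω) (hupp : ω ≤ b • (1 : A)) :
    (a ^ 2) • t ≤ ω * t * ω ∧ ω * t * ω ≤ (b ^ 2) • t := by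
  have swap2 : ∀ x : A, x * (ω * ω) = (ω * ω) * x := fun x => by
    calc x * (ω * ω) = (x * ω) * ω := (mul_assoc _ _ _).symm
      _ = (ω * x) * ω := by rw [hcomm x]
      _ = ω * (x * ω) := mul_assoc _ _ _
      _ = ω * (ω * x) := by rw [hcomm x]
      _ = (ω * ω) * x := (mul_assoc _ _ _).symm
  -- bounds on ω * ω
  set r := CFC.sqrt ω with hr
  have hrr : r * r = ω := CFC.sqrt_mul_sqrt_self ω hωpos
  have hrsa : star r = r := (IsSelfAdjoint.of_nonneg (CFC.sqrt_nonneg ω)).star_eq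
  have e1 : r * (a • (1 : A)) * r = a • ω := by
    rw [mul_smul_comm, mul_one, smul_mul_assoc, hrr]
  have e2 : r * (b • (1 : A)) * r = b • ω := by
    rw [mul_smul_comm, mul_one, smul_mul_assoc, hrr]
  have e3 : r * ω * r = ω * ω := by
    rw [hcomm r, mul_assoc, hrr]
  have h1 : a • ω ≤ ω * ω := by
    rw [← e1, ← e3]
    simpa [hrsa] using star_left_conjugate_le_conjugate hlow r
  have h2 : ω * ω ≤ b • ω := by
    rw [← e2, ← e3]
    simpa [hrsa] using star_left_conjugate_le_conjugate hupp r
  have hω2l : (a ^ 2) • (1 : A) ≤ ω * ω := by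
    calc (a ^ 2) • (1 : A) = a • (a • (1 : A)) := by rw [smul_smul, sq]
      _ ≤ a • ω := smul_le_smul_of_nonneg_left hlow ha.le
      _ ≤ ω * ω := h1
  have hω2u : ω * ω ≤ (b ^ 2) • (1 : A) := by
    calc ω * ω ≤ b • ω := h2
      _ ≤ b • (b • (1 : A)) := smul_le_smul_of_nonneg_left hupp hb
      _ = (b ^ 2) • (1 : A) := by rw [smul_smul, sq]
  -- conjugate by sqrt t
  set s := CFC.sqrt t with hsdef
  have hss : s * s = t := CFC.sqrt_mul_sqrt_self t ht
  have hssa : star s = s := (IsSelfAdjoint.of_nonneg (CFC.sqrt_nonneg t)).star_eq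
  have d1 : s * ((a ^ 2) • (1 : A)) * s = (a ^ 2) • t := by
    rw [mul_smul_comm, mul_one, smul_mul_assoc, hss]
  have d2 : s * ((b ^ 2) • (1 : A)) * s = (b ^ 2) • t := by
    rw [mul_smul_comm, mul_one, smul_mul_assoc, hss]
  have d3 : s * (ω * ω) * s = ω * t * ω := by
    calc s * (ω * ω) * s = ((ω * ω) * s) * s := by rw [swap2 s]
      _ = (ω * ω) * (s * s) := mul_assoc _ _ _
      _ = (ω * ω) * t := by rw [hss]
      _ = ω * (ω * t) := mul_assoc _ _ _
      _ = ω * (t * ω) := by rw [hcomm t]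
      _ = ω * t * ω := (mul_assoc _ _ _).symm
  constructor
  · rw [← d1, ← d3]
    simpa [hssa] using star_left_conjugate_le_conjugate hω2l s
  · rw [← d2, ← d3]
    simpa [hssa] using star_left_conjugate_le_conjugate hω2u s

/-- For a sequence `{ψ_j}` whose Gram series converges and a semi-normalized
sequence `{ω_j}` of positive invertible central elements, `{ψ_j}` is a frame iff
`{ω_j·ψ_j}` is a frame. -/
theorem frame_iff_weighted_sequence_frame
    (ψ : J → H)
    (hsum : ∀ f : H, Summable fun j => ⟪f, ψ j⟫ * ⟪ψ j, f⟫)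
    (ω : J → A) (hωc : ∀ j, ω j ∈ Set.center A)
    (hωpos : ∀ j, 0 ≤ ω j) (hωu : ∀ j, IsUnit (ω j))
    (a b : ℝ) (ha : 0 < a) (hab : a ≤ b)
    (hωlow : ∀ j, a • (1 : A) ≤ ω j) (hωupp : ∀ j, ω j ≤ b • (1 : A)) :
    (∃ Ca Da : ℝ, 0 < Ca ∧ 0 < Da ∧ ∀ f : H,
        Ca • ⟪f, f⟫ ≤ ∑' j, ⟪f, ψ j⟫ * ⟪ψ j, f⟫ ∧
        ∑' j, ⟪f, ψ j⟫ * ⟪ψ j, f⟫ ≤ Da • ⟪f, f⟫) ↔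
    (∃ Cb Db : ℝ, 0 < Cb ∧ 0 < Db ∧
      (∀ f : H, Summable fun j => ⟪f, ψ j <• ω j⟫ * ⟪ψ j <• ω j, f⟫) ∧
      (∀ f : H,
        Cb • ⟪f, f⟫ ≤ ∑' j, ⟪f, ψ j <• ω j⟫ * ⟪ψ j <• ω j, f⟫ ∧
        ∑' j, ⟪f, ψ j <• ω j⟫ * ⟪ψ j <• ω j, f⟫ ≤ Db • ⟪f, f⟫)) := by
  have hb : 0 < b := ha.trans_le hab
  -- positivity of the terms
  have htpos : ∀ (f : H) (j : J), 0 ≤ ⟪f, ψ j⟫ * ⟪ψ j, f⟫ := by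
    intro f j
    have : ⟪f, ψ j⟫ = star ⟪ψ j, f⟫ := (CStarModuleRight.star_inner f (ψ j)).symm
    rw [this]
    exact star_mul_self_nonneg _
  have ht'pos : ∀ (f : H) (j : J), 0 ≤ ⟪f, ψ j <• ω j⟫ * ⟪ψ j <• ω j, f⟫ := by
    intro f j
    have : ⟪f, ψ j <• ω j⟫ = star ⟪ψ j <• ω j, f⟫ :=
      (CStarModuleRight.star_inner f (ψ j <• ω j)).symm
    rw [this]
    exact star_mul_self_nonneg _
  -- the weighted terms are conjugates of the original terms
  have hterm : ∀ (f : H) (j : J),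
      ⟪f, ψ j <• ω j⟫ * ⟪ψ j <• ω j, f⟫ = ω j * (⟪f, ψ j⟫ * ⟪ψ j, f⟫) * ω j := by
    intro f j
    have hsa : star (ω j) = ω j := (IsSelfAdjoint.of_nonneg (hωpos j)).star_eq
    rw [aux_inner_op_smul_left, CStarModuleRight.inner_op_smul_right, hsa]
    simp only [mul_assoc]
  have hkey : ∀ (f : H) (j : J),
      (a ^ 2) • (⟪f, ψ j⟫ * ⟪ψ j, f⟫) ≤ ⟪f, ψ j <• ω j⟫ * ⟪ψ j <• ω j, f⟫ ∧
      ⟪f, ψ j <• ω j⟫ * ⟪ψ j <• ω j, f⟫ ≤ (b ^ 2) • (⟪f, ψ j⟫ * ⟪ψ j, f⟫) := by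
    intro f j
    rw [hterm f j]
    have hcomm : ∀ x : A, x * ω j = ω j * x := fun x =>
      ((Set.mem_center_iff.mp (hωc j)).comm x).symm
    exact aux_conj_bounds hcomm (hωpos j) (htpos f j) ha hb.le (hωlow j) (hωupp j)
  -- summability of the weighted series
  have hsum' : ∀ f : H, Summable fun j => ⟪f, ψ j <• ω j⟫ * ⟪ψ j <• ω j, f⟫ := by
    intro f
    exact aux_summable_of_nonneg_of_le (ht'pos f) (fun j => (hkey f j).2)
      ((hsum f).const_smul ((b : ℝ) ^ 2))
  -- comparison of the sums
  have hSle : ∀ f : H, (a ^ 2) • (∑' j, ⟪f, ψ j⟫ * ⟪ψ j, f⟫) ≤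
      ∑' j, ⟪f, ψ j <• ω j⟫ * ⟪ψ j <• ω j, f⟫ := by
    intro f
    rw [← Summable.tsum_const_smul ((a : ℝ) ^ 2) (hsum f)]
    exact Summable.tsum_le_tsum (fun j => (hkey f j).1) ((hsum f).const_smul _) (hsum' f)
  have hSge : ∀ f : H, (∑' j, ⟪f, ψ j <• ω j⟫ * ⟪ψ j <• ω j, f⟫) ≤
      (b ^ 2) • (∑' j, ⟪f, ψ j⟫ * ⟪ψ j, f⟫) := by
    intro f
    rw [← Summable.tsum_const_smul ((b : ℝ) ^ 2) (hsum f)]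
    exact Summable.tsum_le_tsum (fun j => (hkey f j).2) (hsum' f) ((hsum f).const_smul _)
  constructor
  · rintro ⟨Ca, Da, hCa, hDa, hbd⟩
    refine ⟨a ^ 2 * Ca, b ^ 2 * Da, by positivity, by positivity, hsum', fun f => ?_⟩
    constructor
    · calc (a ^ 2 * Ca) • ⟪f, f⟫ = (a ^ 2) • (Ca • ⟪f, f⟫) := by rw [smul_smul]
        _ ≤ (a ^ 2) • (∑' j, ⟪f, ψ j⟫ * ⟪ψ j, f⟫) :=
            smul_le_smul_of_nonneg_left (hbd f).1 (by positivity)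
        _ ≤ ∑' j, ⟪f, ψ j <• ω j⟫ * ⟪ψ j <• ω j, f⟫ := hSle f
    · calc ∑' j, ⟪f, ψ j <• ω j⟫ * ⟪ψ j <• ω j, f⟫
          ≤ (b ^ 2) • (∑' j, ⟪f, ψ j⟫ * ⟪ψ j, f⟫) := hSge f
        _ ≤ (b ^ 2) • (Da • ⟪f, f⟫) :=
            smul_le_smul_of_nonneg_left (hbd f).2 (by positivity)
        _ = (b ^ 2 * Da) • ⟪f, f⟫ := by rw [smul_smul]
  · rintro ⟨Cb, Db, hCb, hDb, _, hbd⟩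
    refine ⟨Cb / b ^ 2, Db / a ^ 2, by positivity, by positivity, fun f => ?_⟩
    constructor
    · have h : Cb • ⟪f, f⟫ ≤ (b ^ 2) • (∑' j, ⟪f, ψ j⟫ * ⟪ψ j, f⟫) :=
        (hbd f).1.trans (hSge f)
      have h2 := smul_le_smul_of_nonneg_left h
        (by positivity : (0 : ℝ) ≤ (b ^ 2)⁻¹)
      rw [smul_smul, smul_smul, inv_mul_cancel₀ (by positivity : (b : ℝ) ^ 2 ≠ 0),
        one_smul] at h2
      simpa [div_eq_inv_mul] using h2
    · have h : (a ^ 2) • (∑' j, ⟪f, ψ j⟫ * ⟪ψ j, f⟫) ≤ Db • ⟪f, f⟫ :=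
        (hSle f).trans (hbd f).2
      have h2 := smul_le_smul_of_nonneg_left h
        (by positivity : (0 : ℝ) ≤ (a ^ 2)⁻¹)
      rw [smul_smul, smul_smul, inv_mul_cancel₀ (by positivity : (a : ℝ) ^ 2 ≠ 0),
        one_smul] at h2
      simpa [div_eq_inv_mul] using h2

end
end
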